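/- In the rooted-tree self-backhauling model with full-duplex base stations serving a mix of downlink (DL) and uplink (UL) users, the max-min rate equals γ* = min(γ_tx, γ_rx), where γ_tx = ( max_{i ∈ {0,…,N}} c_{tx,i} )^{-1} with c_{tx,i} = Σ_{DL users u with σ(u)=i} 1/R^f_{a,u} + (f(i) − w^{DL}_i)/R^f_1 for i ≠ 0 and c_{tx,0} = Σ_{DL users u with σ(u)=0} 1/R^f_{a,u} + (f^{DL}(0) − w^{DL}_0)/R^f_1, and γ_rx = ( max_{i ∈ {0,…,N}} c_{rx,i} )^{-1} with c_{rx,i} obtained from c_{tx,i} by replacing DL by UL everywhere (so c_{rx,i} = Σ_{UL users u with σ(u)=i} 1/R^f_{a,u} + (f(i) − w^{UL}_i)/R^f_1 for i ≠ 0 and c_{rx,0} = Σ_{UL users u with σ(u)=0} 1/R^f_{a,u} + (f^{UL}(0) − w^{UL}_0)/R^f_1). -/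

import Mathlib

open Finset
open scoped Classical

/-- A full-duplex self-backhauled cellular network on a routing tree, serving a mix of
downlink (DL) and uplink (UL) users. BSs are indexed by `Fin (N+1)` with `0` the fiber
site; there are `U+1 ≥ 1` users, each labelled DL (`dl u = true`) or UL
(`dl u = false`). Under full duplex, every backhaul link has instantaneous rate `R1f`
and the access link of user `u` has instantaneous rate `Raf u`. -/
structure FDNet (N U : ℕ) where
  /-- the parent map of the routing tree (parent of the root is the root) -/
  p : Fin (N + 1) → Fin (N + 1)
  hp0 : p 0 = 0
  hroot : ∀ i : Fin (N + 1), ∃ m : ℕ, p^[m] i = 0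
  /-- serving BS of each user -/
  σ : Fin (U + 1) → Fin (N + 1)
  /-- `true` if the user is downlink, `false` if uplink -/
  dl : Fin (U + 1) → Bool
  /-- instantaneous full-duplex backhaul rate -/
  R1f : ℝ
  hR1f : 0 < R1f
  /-- instantaneous full-duplex access rates -/
  Raf : Fin (U + 1) → ℝ
  hRaf : ∀ u, 0 < Raf u

namespace FDNet

variable {N U : ℕ}

/-- Links: access link of each user (`inl u`), or the backhaul link `(p i, i)` for
`i ≠ 0` (`inr i`; the summand `inr 0` is a dummy which is never a hop). -/
abbrev Link (N U : ℕ) := Fin (U + 1) ⊕ Fin (N + 1)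

/-- BS `i` lies on the tree path from the fiber site `0` to BS `j`. -/
def onPath (net : FDNet N U) (i j : Fin (N + 1)) : Prop :=
  ∃ m : ℕ, net.p^[m] j = i

/-- `l` is a hop on the route of user `u`. -/
def isHop (net : FDNet N U) (l : Link N U) (u : Fin (U + 1)) : Prop :=
  match l with
  | .inl u' => u' = u
  | .inr i => i ≠ 0 ∧ net.onPath i (net.σ u)

/-- BS `j` transmits when link `l` is active serving the data of user `u`
(for a DL user data flows away from the root, for a UL user toward the root). -/
def txAt (net : FDNet N U) (l : Link N U) (u : Fin (U + 1)) (j : Fin (N + 1)) : Prop :=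
  match l with
  | .inl u' => net.σ u' = j ∧ net.dl u' = true
  | .inr i => i ≠ 0 ∧ ((net.dl u = true ∧ j = net.p i) ∨ (net.dl u = false ∧ j = i))

/-- BS `j` receives when link `l` is active serving the data of user `u`. -/
def rxAt (net : FDNet N U) (l : Link N U) (u : Fin (U + 1)) (j : Fin (N + 1)) : Prop :=
  match l with
  | .inl u' => net.σ u' = j ∧ net.dl u' = false
  | .inr i => i ≠ 0 ∧ ((net.dl u = true ∧ j = i) ∨ (net.dl u = false ∧ j = net.p i))

/-- instantaneous rate of link `l`. -/
noncomputable def rate (net : FDNet N U) : Link N U → ℝ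
  | .inl u => net.Raf u
  | .inr _ => net.R1f

/-- Feasible scheduling matrix for full-duplex BSs: entries in `[0,1]`, zero unless the
link is a hop on the route of the user, and for every BS the total transmission time is
at most `1` and the total reception time is at most `1` (two separate constraints). -/
def Feasible (net : FDNet N U) (τ : Link N U → Fin (U + 1) → ℝ) : Prop :=
  (∀ l u, 0 ≤ τ l u ∧ τ l u ≤ 1) ∧
  (∀ l u, ¬ net.isHop l u → τ l u = 0) ∧
  (∀ j : Fin (N + 1),
    ∑ l : Link N U, ∑ u : Fin (U + 1), (if net.txAt l u j then τ l u else 0) ≤ 1) ∧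
  (∀ j : Fin (N + 1),
    ∑ l : Link N U, ∑ u : Fin (U + 1), (if net.rxAt l u j then τ l u else 0) ≤ 1)

/-- End-to-end rate of user `u`: minimum long-term rate over the hops of its route. -/
noncomputable def e2e (net : FDNet N U) (τ : Link N U → Fin (U + 1) → ℝ)
    (u : Fin (U + 1)) : ℝ :=
  (Finset.univ.filter fun l : Link N U => net.isHop l u).inf'
    ⟨Sum.inl u, Finset.mem_filter.mpr ⟨Finset.mem_univ _, rfl⟩⟩
    fun l => net.rate l * τ l u

/-- total effective load on BS `i`. -/
noncomputable def f (net : FDNet N U) (i : Fin (N + 1)) : ℕ :=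
  (Finset.univ.filter fun u : Fin (U + 1) => net.onPath i (net.σ u)).card

/-- effective DL load on BS `i`. -/
noncomputable def fDL (net : FDNet N U) (i : Fin (N + 1)) : ℕ :=
  (Finset.univ.filter fun u : Fin (U + 1) =>
    net.dl u = true ∧ net.onPath i (net.σ u)).card

/-- effective UL load on BS `i`. -/
noncomputable def fUL (net : FDNet N U) (i : Fin (N + 1)) : ℕ :=
  (Finset.univ.filter fun u : Fin (U + 1) =>
    net.dl u = false ∧ net.onPath i (net.σ u)).card

/-- number of DL users served by BS `i`. -/
noncomputable def wDL (net : FDNet N U) (i : Fin (N + 1)) : ℕ :=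
  (Finset.univ.filter fun u : Fin (U + 1) => net.dl u = true ∧ net.σ u = i).card

/-- number of UL users served by BS `i`. -/
noncomputable def wUL (net : FDNet N U) (i : Fin (N + 1)) : ℕ :=
  (Finset.univ.filter fun u : Fin (U + 1) => net.dl u = false ∧ net.σ u = i).card

/-- transmission time coefficient `c_{tx,i}`. -/
noncomputable def ctx (net : FDNet N U) (i : Fin (N + 1)) : ℝ :=
  (∑ u : Fin (U + 1),
    if net.σ u = i ∧ net.dl u = true then (net.Raf u)⁻¹ else 0)
    + (if i = 0 then ((net.fDL 0 : ℝ) - (net.wDL 0 : ℝ)) / net.R1f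
       else ((net.f i : ℝ) - (net.wDL i : ℝ)) / net.R1f)

/-- reception time coefficient `c_{rx,i}` (DL replaced by UL everywhere). -/
noncomputable def crx (net : FDNet N U) (i : Fin (N + 1)) : ℝ :=
  (∑ u : Fin (U + 1),
    if net.σ u = i ∧ net.dl u = false then (net.Raf u)⁻¹ else 0)
    + (if i = 0 then ((net.fUL 0 : ℝ) - (net.wUL 0 : ℝ)) / net.R1f
       else ((net.f i : ℝ) - (net.wUL i : ℝ)) / net.R1f)

end FDNet

/-!
If every hop `l` of every user carries rate at least `θ`, the hop is scheduled for time at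
least `θ / r_l`. The coefficient `c_{tx,j}` (resp. `c_{rx,j}`) is exactly the sum of `1 / r_l`
over the hops at which BS `j` transmits (resp. receives): the access links of its own DL (UL)
users, and one backhaul hop for every user routed through `j` (the hop to the child of `j`
towards a DL (UL) user not served by `j`, the hop to the parent of `j ≠ 0` for the UL (DL)
users). So `θ · c_{tx,j} ≤ 1` and `θ · c_{rx,j} ≤ 1`, i.e. `θ ≤ γ*`, and the schedule giving
each hop the time `γ* / r_l` attains `γ*`.
-/

lemma le_inv_sup'_iff_forall_mul_le_one {ι : Type*} {s : Finset ι} (hs : s.Nonempty)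
    {f : ι → ℝ} (hf : ∀ i ∈ s, 0 ≤ f i) (hpos : 0 < s.sup' hs f) {θ : ℝ} :
    θ ≤ (s.sup' hs f)⁻¹ ↔ ∀ i ∈ s, θ * f i ≤ 1 := by
  rw [← one_div, le_div_iff₀ hpos]
  obtain ⟨i₀, hi₀, hsup⟩ := exists_mem_eq_sup' hs f
  refine ⟨fun h i hi => ?_, fun h => hsup ▸ h i₀ hi₀⟩
  rcases le_total 0 θ with hθ | hθ
  · exact (mul_le_mul_of_nonneg_left (le_sup' f hi) hθ).trans h
  · exact (mul_nonpos_of_nonpos_of_nonneg hθ (hf i hi)).trans zero_le_one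

namespace FDNet

variable {N U : ℕ} (net : FDNet N U)

lemma rate_pos (l : Link N U) : 0 < net.rate l := by
  cases l
  exacts [net.hRaf _, net.hR1f]

lemma iterate_p_zero (m : ℕ) : net.p^[m] 0 = 0 := Function.iterate_fixed net.hp0 m

lemma onPath_refl (j : Fin (N + 1)) : net.onPath j j := ⟨0, rfl⟩

lemma eq_zero_of_iterate_eq_self {x : Fin (N + 1)} {k : ℕ} (hk : k ≠ 0)
    (h : net.p^[k] x = x) : x = 0 := by
  obtain ⟨m, hm⟩ := net.hroot x
  obtain ⟨d, hd⟩ : ∃ d, k * m = d + m :=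
    ⟨k * m - m, (Nat.sub_add_cancel (Nat.le_mul_of_pos_left m (Nat.pos_of_ne_zero hk))).symm⟩
  calc x = net.p^[k * m] x := by rw [Function.iterate_mul, Function.iterate_fixed h]
    _ = 0 := by rw [hd, Function.iterate_add_apply, hm, iterate_p_zero]

lemma eq_of_onPath_of_p_eq {s i i' : Fin (N + 1)} (hi : i ≠ 0) (hi' : i' ≠ 0)
    (h : net.onPath i s) (h' : net.onPath i' s) (hp : net.p i = net.p i') : i = i' := by
  obtain ⟨m, rfl⟩ := h
  obtain ⟨m', rfl⟩ := h'
  wlog hle : m ≤ m' generalizing m m'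
  · exact (this m' hi' m hi hp.symm (le_of_not_ge hle)).symm
  obtain ⟨d, rfl⟩ := Nat.exists_eq_add_of_le hle
  rw [Nat.add_comm m d, Function.iterate_add_apply] at hi' hp ⊢
  rcases d with _ | d
  · rfl
  · refine absurd (net.eq_zero_of_iterate_eq_self d.succ_ne_zero ?_) hi'
    rw [Function.iterate_succ_apply net.p d (net.p^[d + 1] _), ← hp, ← Function.iterate_succ_apply]

lemma exists_child_onPath_iff {s j : Fin (N + 1)} :
    (∃ i, i ≠ 0 ∧ net.onPath i s ∧ net.p i = j) ↔ net.onPath j s ∧ s ≠ j := by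
  constructor
  · rintro ⟨_, hi0, ⟨m, rfl⟩, rfl⟩
    have hj : net.p^[m + 1] s = net.p (net.p^[m] s) := Function.iterate_succ_apply' _ _ _
    refine ⟨⟨m + 1, hj⟩, fun hs => hi0 ?_⟩
    rw [net.eq_zero_of_iterate_eq_self m.succ_ne_zero (hj.trans hs.symm), iterate_p_zero]
  · rintro ⟨hjs, hsj⟩
    classical
    obtain ⟨k, hk⟩ : ∃ k, Nat.find hjs = k + 1 :=
      Nat.exists_eq_succ_of_ne_zero fun h0 => hsj (by simpa [h0] using Nat.find_spec hjs)
    have hkj : net.p^[k] s ≠ j := Nat.find_min hjs (by omega)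
    have hpk : net.p (net.p^[k] s) = j := by
      rw [← Function.iterate_succ_apply' net.p, Nat.succ_eq_add_one, ← hk, Nat.find_spec hjs]
    refine ⟨net.p^[k] s, fun h0 => hkj ?_, ⟨k, rfl⟩, hpk⟩
    rw [← hpk, h0, net.hp0]

lemma card_filter_child (s j : Fin (N + 1)) :
    #{i | i ≠ 0 ∧ net.onPath i s ∧ net.p i = j} = if net.onPath j s ∧ s ≠ j then 1 else 0 := by
  split_ifs with h
  · obtain ⟨i₀, hi₀, hs₀, hp₀⟩ := net.exists_child_onPath_iff.mpr h
    refine card_eq_one.mpr ⟨i₀, eq_singleton_iff_unique_mem.mpr ⟨?_, ?_⟩⟩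
    · simpa using ⟨hi₀, hs₀, hp₀⟩
    · simp only [mem_filter, mem_univ, true_and]
      rintro i ⟨hi, hs, hp⟩
      exact net.eq_of_onPath_of_p_eq hi hi₀ hs hs₀ (hp.trans hp₀.symm)
  · refine card_eq_zero.mpr (filter_eq_empty_iff.mpr ?_)
    rintro i - ⟨hi, hs, hp⟩
    exact h (net.exists_child_onPath_iff.mp ⟨i, hi, hs, hp⟩)

def active (b : Bool) (l : Link N U) (u : Fin (U + 1)) (j : Fin (N + 1)) : Prop :=
  match l with
  | .inl u' => net.σ u' = j ∧ net.dl u' = b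
  | .inr i => i ≠ 0 ∧ ((net.dl u = b ∧ j = net.p i) ∨ (net.dl u = !b ∧ j = i))

lemma active_true_iff {l : Link N U} {u : Fin (U + 1)} {j : Fin (N + 1)} :
    net.active true l u j ↔ net.txAt l u j := by
  cases l <;> simp [active, txAt]

lemma active_false_iff {l : Link N U} {u : Fin (U + 1)} {j : Fin (N + 1)} :
    net.active false l u j ↔ net.rxAt l u j := by
  cases l <;> simp [active, rxAt, or_comm]

lemma exists_active_of_isHop {l : Link N U} {u : Fin (U + 1)} (h : net.isHop l u) :
    ∃ b j, net.active b l u j := by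
  cases l with
  | inl u' => exact ⟨net.dl u', net.σ u', rfl, rfl⟩
  | inr i => exact ⟨net.dl u, net.p i, h.1, .inl ⟨rfl, rfl⟩⟩

noncomputable def fDir (b : Bool) (i : Fin (N + 1)) : ℕ :=
  #{u | net.dl u = b ∧ net.onPath i (net.σ u)}

noncomputable def wDir (b : Bool) (i : Fin (N + 1)) : ℕ :=
  #{u | net.dl u = b ∧ net.σ u = i}

noncomputable def timeCoeff (b : Bool) (i : Fin (N + 1)) : ℝ :=
  (∑ u : Fin (U + 1), if net.σ u = i ∧ net.dl u = b then (net.Raf u)⁻¹ else 0)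
    + (if i = 0 then ((net.fDir b 0 : ℝ) - (net.wDir b 0 : ℝ)) / net.R1f
       else ((net.f i : ℝ) - (net.wDir b i : ℝ)) / net.R1f)

lemma timeCoeff_true : net.timeCoeff true = net.ctx := rfl

lemma timeCoeff_false : net.timeCoeff false = net.crx := rfl

lemma card_filter_backhaul_active (b : Bool) (j : Fin (N + 1)) (u : Fin (U + 1)) :
    #{i | net.isHop (.inr i) u ∧ net.active b (.inr i) u j}
      = (if net.dl u = b ∧ net.onPath j (net.σ u) ∧ net.σ u ≠ j then 1 else 0)
        + (if net.dl u = !b ∧ j ≠ 0 ∧ net.onPath j (net.σ u) then 1 else 0) := by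
  by_cases hb : net.dl u = b
  · have hfilter : univ.filter (fun i => net.isHop (.inr i) u ∧ net.active b (.inr i) u j)
        = univ.filter fun i => i ≠ 0 ∧ net.onPath i (net.σ u) ∧ net.p i = j := by
      ext i
      simp only [mem_filter, mem_univ, true_and, isHop, active, hb,
        Bool.eq_not_self, false_and, or_false, eq_comm (a := j)]
      tauto
    rw [hfilter, card_filter_child]
    simp [hb]
  · have hb' : net.dl u = !b := Bool.eq_not.mpr hb
    have hfilter : univ.filter (fun i => net.isHop (.inr i) u ∧ net.active b (.inr i) u j)
        = univ.filter fun i => i = j ∧ j ≠ 0 ∧ net.onPath j (net.σ u) := by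
      ext i
      simp only [mem_filter, mem_univ, true_and, isHop, active, hb',
        Bool.not_eq_self, false_and, false_or, eq_comm (a := j)]
      constructor
      · rintro ⟨⟨hi, hs⟩, -, rfl⟩
        exact ⟨rfl, hi, hs⟩
      · rintro ⟨rfl, hi, hs⟩
        exact ⟨⟨hi, hs⟩, hi, rfl⟩
    rw [hfilter]
    by_cases h : j ≠ 0 ∧ net.onPath j (net.σ u) <;> simp [h, hb', filter_eq']

lemma card_strictDesc_add_wDir (b : Bool) (j : Fin (N + 1)) :
    #{u | net.dl u = b ∧ net.onPath j (net.σ u) ∧ net.σ u ≠ j} + net.wDir b j = net.fDir b j := by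
  rw [wDir, fDir, ← card_union_of_disjoint (disjoint_filter.mpr fun u _ h h' => h.2.2 h'.2)]
  congr 1
  ext u
  by_cases hu : net.σ u = j
  · simp [hu, net.onPath_refl]
  · simp [hu]

lemma fDir_add_fDir_not (b : Bool) (j : Fin (N + 1)) :
    net.fDir b j + net.fDir (!b) j = net.f j := by
  rw [fDir, fDir, f, ← card_union_of_disjoint (disjoint_filter.mpr fun u _ h h' => by
    simp [h.1] at h')]
  congr 1
  ext u
  simp only [mem_union, mem_filter, mem_univ, true_and, ← or_and_right]
  cases net.dl u <;> cases b <;> simp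

lemma sum_access_active (b : Bool) (j : Fin (N + 1)) :
    ∑ u' : Fin (U + 1), ∑ u : Fin (U + 1),
      (if net.isHop (.inl u') u ∧ net.active b (.inl u') u j then (net.rate (.inl u'))⁻¹ else 0)
      = ∑ u : Fin (U + 1), if net.σ u = j ∧ net.dl u = b then (net.Raf u)⁻¹ else 0 := by
  refine sum_congr rfl fun u' _ => ?_
  rw [sum_eq_single u' (fun u _ hu => if_neg fun h => hu h.1.symm) (by simp)]
  simp [isHop, active, rate]

lemma sum_backhaul_active (b : Bool) (j : Fin (N + 1)) :
    ∑ i : Fin (N + 1), ∑ u : Fin (U + 1),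
      (if net.isHop (.inr i) u ∧ net.active b (.inr i) u j then (net.rate (.inr i))⁻¹ else 0)
      = if j = 0 then ((net.fDir b 0 : ℝ) - (net.wDir b 0 : ℝ)) / net.R1f
        else ((net.f j : ℝ) - (net.wDir b j : ℝ)) / net.R1f := by
  have hcount : ∑ u : Fin (U + 1), #{i | net.isHop (.inr i) u ∧ net.active b (.inr i) u j}
      = #{u | net.dl u = b ∧ net.onPath j (net.σ u) ∧ net.σ u ≠ j}
        + #{u | net.dl u = !b ∧ j ≠ 0 ∧ net.onPath j (net.σ u)} := by
    simp_rw [net.card_filter_backhaul_active b j]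
    rw [sum_add_distrib, card_filter, card_filter]
  have hA := net.card_strictDesc_add_wDir b j
  have hsum : ∑ i : Fin (N + 1), ∑ u : Fin (U + 1),
      (if net.isHop (.inr i) u ∧ net.active b (.inr i) u j then (net.rate (.inr i))⁻¹ else 0)
      = ((#{u | net.dl u = b ∧ net.onPath j (net.σ u) ∧ net.σ u ≠ j}
        + #{u | net.dl u = !b ∧ j ≠ 0 ∧ net.onPath j (net.σ u)} : ℕ) : ℝ) / net.R1f := by
    rw [sum_comm]
    simp only [rate, ← sum_filter, sum_const, nsmul_eq_mul,
      ← sum_mul, ← Nat.cast_sum, hcount, div_eq_mul_inv]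
  rw [hsum]
  split_ifs with hj
  · subst hj
    have hB : #{u | net.dl u = !b ∧ (0 : Fin (N + 1)) ≠ 0 ∧ net.onPath 0 (net.σ u)} = 0 := by
      simp
    rw [hB, ← hA]
    push_cast
    ring
  · have hB : #{u | net.dl u = !b ∧ j ≠ 0 ∧ net.onPath j (net.σ u)} = net.fDir (!b) j := by
      simp only [hj, ne_eq, not_false_eq_true, true_and, fDir]
    rw [hB, ← net.fDir_add_fDir_not b j, ← hA]
    push_cast
    ring

lemma sum_hop_active_inv_rate (b : Bool) (j : Fin (N + 1)) :
    ∑ l : Link N U, ∑ u : Fin (U + 1),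
      (if net.isHop l u ∧ net.active b l u j then (net.rate l)⁻¹ else 0) = net.timeCoeff b j := by
  rw [Fintype.sum_sum_type, sum_access_active, sum_backhaul_active, timeCoeff]

lemma timeCoeff_nonneg (b : Bool) (j : Fin (N + 1)) : 0 ≤ net.timeCoeff b j := by
  rw [← sum_hop_active_inv_rate]
  refine sum_nonneg fun l _ => sum_nonneg fun u _ => ?_
  exact ite_nonneg (inv_nonneg.mpr (net.rate_pos l).le) le_rfl

lemma inv_rate_le_timeCoeff {b : Bool} {l : Link N U} {u : Fin (U + 1)} {j : Fin (N + 1)}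
    (hhop : net.isHop l u) (hact : net.active b l u j) : (net.rate l)⁻¹ ≤ net.timeCoeff b j := by
  rw [← sum_hop_active_inv_rate]
  have hnonneg : ∀ l' u',
      0 ≤ if net.isHop l' u' ∧ net.active b l' u' j then (net.rate l')⁻¹ else 0 :=
    fun l' _ => ite_nonneg (inv_nonneg.mpr (net.rate_pos l').le) le_rfl
  calc (net.rate l)⁻¹ = if net.isHop l u ∧ net.active b l u j then (net.rate l)⁻¹ else 0 := by
        rw [if_pos ⟨hhop, hact⟩]
    _ ≤ ∑ u', if net.isHop l u' ∧ net.active b l u' j then (net.rate l)⁻¹ else 0 :=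
        single_le_sum (fun u' _ => hnonneg l u') (mem_univ u)
    _ ≤ _ := single_le_sum (f := fun l' => ∑ u', _)
        (fun l' _ => sum_nonneg fun u' _ => hnonneg l' u') (mem_univ l)

lemma sup'_timeCoeff_pos {b : Bool} (hb : ∃ u, net.dl u = b) :
    0 < univ.sup' univ_nonempty (net.timeCoeff b) := by
  obtain ⟨u, hu⟩ := hb
  calc 0 < (net.Raf u)⁻¹ := inv_pos.mpr (net.hRaf u)
    _ ≤ net.timeCoeff b (net.σ u) := net.inv_rate_le_timeCoeff (l := .inl u) rfl ⟨rfl, hu⟩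
    _ ≤ _ := le_sup' _ (mem_univ _)

noncomputable def busyTime (b : Bool) (τ : Link N U → Fin (U + 1) → ℝ) (j : Fin (N + 1)) : ℝ :=
  ∑ l : Link N U, ∑ u : Fin (U + 1), if net.active b l u j then τ l u else 0

lemma feasible_iff {τ : Link N U → Fin (U + 1) → ℝ} :
    net.Feasible τ ↔ (∀ l u, 0 ≤ τ l u ∧ τ l u ≤ 1) ∧ (∀ l u, ¬ net.isHop l u → τ l u = 0) ∧
      ∀ b j, net.busyTime b τ j ≤ 1 := by
  simp only [Feasible, busyTime, Bool.forall_bool, active_true_iff, active_false_iff,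
    forall_and]
  tauto

lemma mul_timeCoeff_le_busyTime {τ : Link N U → Fin (U + 1) → ℝ} {θ : ℝ}
    (hτ : ∀ l u, 0 ≤ τ l u) (hθ : ∀ l u, net.isHop l u → θ ≤ net.rate l * τ l u)
    (b : Bool) (j : Fin (N + 1)) : θ * net.timeCoeff b j ≤ net.busyTime b τ j := by
  rw [← sum_hop_active_inv_rate, mul_sum]
  refine sum_le_sum fun l _ => ?_
  rw [mul_sum]
  refine sum_le_sum fun u _ => ?_
  by_cases hact : net.active b l u j
  · by_cases hhop : net.isHop l u
    · rw [if_pos ⟨hhop, hact⟩, if_pos hact, ← div_eq_mul_inv, div_le_iff₀' (net.rate_pos l)]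
      exact hθ l u hhop
    · rw [if_neg fun h => hhop h.1, if_pos hact, mul_zero]
      exact hτ l u
  · rw [if_neg fun h => hact h.2, if_neg hact, mul_zero]

lemma inf'_e2e_le (τ : Link N U → Fin (U + 1) → ℝ) {l : Link N U} {u : Fin (U + 1)}
    (h : net.isHop l u) : univ.inf' univ_nonempty (net.e2e τ) ≤ net.rate l * τ l u :=
  (inf'_le _ (mem_univ u)).trans (inf'_le (fun l => net.rate l * τ l u) (by simpa using h))

noncomputable def uniformSchedule (γ : ℝ) (l : Link N U) (u : Fin (U + 1)) : ℝ :=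
  if net.isHop l u then γ / net.rate l else 0

lemma e2e_uniformSchedule (γ : ℝ) (u : Fin (U + 1)) : net.e2e (net.uniformSchedule γ) u = γ := by
  have hval : ∀ l, net.isHop l u → net.rate l * net.uniformSchedule γ l u = γ := fun l hl => by
    rw [uniformSchedule, if_pos hl, mul_div_cancel₀ _ (net.rate_pos l).ne']
  have hmem : (.inl u : Link N U) ∈ univ.filter fun l => net.isHop l u :=
    mem_filter.mpr ⟨mem_univ _, rfl⟩
  unfold e2e
  exact le_antisymm (inf'_le_of_le _ hmem (hval (.inl u) rfl).le)
    (le_inf' _ _ fun l hl => (hval l (mem_filter.mp hl).2).ge)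

lemma busyTime_uniformSchedule (γ : ℝ) (b : Bool) (j : Fin (N + 1)) :
    net.busyTime b (net.uniformSchedule γ) j = γ * net.timeCoeff b j := by
  rw [← sum_hop_active_inv_rate, mul_sum, busyTime]
  refine sum_congr rfl fun l _ => ?_
  rw [mul_sum]
  refine sum_congr rfl fun u _ => ?_
  by_cases hact : net.active b l u j <;> by_cases hhop : net.isHop l u <;>
    simp [uniformSchedule, hact, hhop, div_eq_mul_inv]

lemma feasible_uniformSchedule {γ : ℝ} (hγ : 0 ≤ γ) (h : ∀ b j, γ * net.timeCoeff b j ≤ 1) :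
    net.Feasible (net.uniformSchedule γ) := by
  refine net.feasible_iff.mpr ⟨fun l u => ?_, fun l u hl => if_neg hl, fun b j => ?_⟩
  · unfold uniformSchedule
    split_ifs with hhop
    · obtain ⟨b, j, hact⟩ := net.exists_active_of_isHop hhop
      refine ⟨div_nonneg hγ (net.rate_pos l).le, ?_⟩
      calc γ / net.rate l = γ * (net.rate l)⁻¹ := div_eq_mul_inv _ _
        _ ≤ γ * net.timeCoeff b j := by gcongr; exact net.inv_rate_le_timeCoeff hhop hact
        _ ≤ 1 := h b j
    · exact ⟨le_rfl, zero_le_one⟩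
  · rw [busyTime_uniformSchedule]
    exact h b j

end FDNet

/-- **Max-min rate, full-duplex IAB (Theorem 2).** With full-duplex BSs on a
nearest-neighbour routing tree serving a mix of DL and UL users, the supremum over
feasible scheduling matrices of the minimum end-to-end user rate is attained and equals
`γ* = min (γ_tx, γ_rx)` with `γ_tx = (max_i c_{tx,i})⁻¹` and `γ_rx = (max_i c_{rx,i})⁻¹`. -/
theorem maxmin_fullduplex_IAB (N U : ℕ) (net : FDNet N U)
    (hDL : ∃ u, net.dl u = true) (hUL : ∃ u, net.dl u = false) :
    IsGreatest
      {θ : ℝ | ∃ τ : FDNet.Link N U → Fin (U + 1) → ℝ,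
          net.Feasible τ ∧ θ = Finset.univ.inf' Finset.univ_nonempty (net.e2e τ)}
      (min ((Finset.univ.sup' Finset.univ_nonempty net.ctx)⁻¹)
        ((Finset.univ.sup' Finset.univ_nonempty net.crx)⁻¹)) := by
  set γ := min ((univ.sup' univ_nonempty net.ctx)⁻¹) ((univ.sup' univ_nonempty net.crx)⁻¹)
  have hle_γ : ∀ θ, θ ≤ γ ↔ ∀ b j, θ * net.timeCoeff b j ≤ 1 := fun θ => by
    rw [le_min_iff, ← net.timeCoeff_true, ← net.timeCoeff_false,
      le_inv_sup'_iff_forall_mul_le_one _ (fun j _ => net.timeCoeff_nonneg true j)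
        (net.sup'_timeCoeff_pos hDL),
      le_inv_sup'_iff_forall_mul_le_one _ (fun j _ => net.timeCoeff_nonneg false j)
        (net.sup'_timeCoeff_pos hUL)]
    simp only [mem_univ, true_implies, Bool.forall_bool, and_comm]
  have hγ : 0 ≤ γ := le_min (inv_nonneg.mpr (net.sup'_timeCoeff_pos hDL).le)
    (inv_nonneg.mpr (net.sup'_timeCoeff_pos hUL).le)
  refine ⟨⟨net.uniformSchedule γ, net.feasible_uniformSchedule hγ ((hle_γ γ).mp le_rfl), ?_⟩, ?_⟩
  · simp only [net.e2e_uniformSchedule, inf'_const]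
  · rintro _ ⟨τ, hτ, rfl⟩
    obtain ⟨hrange, -, hbusy⟩ := net.feasible_iff.mp hτ
    exact (hle_γ _).mpr fun b j => (net.mul_timeCoeff_le_busyTime (fun l u => (hrange l u).1)
      (fun l u => net.inf'_e2e_le τ) b j).trans (hbusy b j)
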